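/- For every triad (b,c,d) in the real Cayley–Dickson algebra 𝔸ₙ (all εᵢ = 1), the triple associator satisfies T(b,c,d) = 2·((b·d)·c); in particular T(b,c,d) ≠ 0, so every triad is non-associative. -/

import Mathlib

noncomputable section

/-- The real Cayley–Dickson algebra carrier: `CD 0 = ℝ`, `CD (n+1) = CD n × CD n`. -/
def CD : ℕ → Type
  | 0 => ℝ
  | n + 1 => CD n × CD n

instance CD.instAddCommGroup : (n : ℕ) → AddCommGroup (CD n)
  | 0 => inferInstanceAs (AddCommGroup ℝ)
  | n + 1 =>
    letI := CD.instAddCommGroup n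
    inferInstanceAs (AddCommGroup (CD n × CD n))

instance CD.instModule : (n : ℕ) → Module ℝ (CD n)
  | 0 => inferInstanceAs (Module ℝ ℝ)
  | n + 1 =>
    letI := CD.instModule n
    inferInstanceAs (Module ℝ (CD n × CD n))

/-- The unit of the Cayley–Dickson algebra. -/
def CD.one : (n : ℕ) → CD n
  | 0 => (1 : ℝ)
  | n + 1 => (CD.one n, 0)

/-- Conjugation: `(a, b)* = (a*, -b)`, identity on `ℝ`. -/
def CD.conj : (n : ℕ) → CD n → CD n
  | 0, a => a
  | n + 1, x => (CD.conj n x.1, -x.2)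

/-- Cayley–Dickson multiplication with sign vector `ε`:
`(a,b)·(c,d) = (a·c − ε (n+1) • (d*·b), d·a + b·c*)`. -/
def CD.mul (ε : ℕ → ℝ) : (n : ℕ) → CD n → CD n → CD n
  | 0, a, c => (show ℝ from a) * (show ℝ from c)
  | n + 1, x, y =>
    (CD.mul ε n x.1 y.1 - ε (n + 1) • CD.mul ε n (CD.conj n y.2) x.2,
     CD.mul ε n y.2 x.1 + CD.mul ε n x.2 (CD.conj n y.1))

/-- The standard basis element `e α` of `CD n`, for `α ⊆ {1,…,n}`. -/
def CD.basis : (n : ℕ) → Finset ℕ → CD n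
  | 0, _ => (1 : ℝ)
  | n + 1, α =>
    if n + 1 ∈ α then ((0 : CD n), CD.basis n (α.erase (n + 1)))
    else (CD.basis n α, (0 : CD n))

/-- `α` indexes a pure basis element of `CD n`. -/
def CD.IsPure (n : ℕ) (α : Finset ℕ) : Prop :=
  α.Nonempty ∧ α ⊆ Finset.Icc 1 n

/-- The associator `[x,y,z] = (x·y)·z − x·(y·z)`. -/
def CD.assoc (ε : ℕ → ℝ) (n : ℕ) (x y z : CD n) : CD n :=
  CD.mul ε n (CD.mul ε n x y) z - CD.mul ε n x (CD.mul ε n y z)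

/-- A triad: indices of three pairwise distinct pure basis elements `b, c, d`
with `d ≠ ±(b·c)` (all signs `εᵢ = 1`). -/
def CD.IsTriad (n : ℕ) (α β γ : Finset ℕ) : Prop :=
  CD.IsPure n α ∧ CD.IsPure n β ∧ CD.IsPure n γ ∧
  α ≠ β ∧ α ≠ γ ∧ β ≠ γ ∧
  CD.basis n γ ≠ CD.mul (fun _ => 1) n (CD.basis n α) (CD.basis n β) ∧
  CD.basis n γ ≠ -CD.mul (fun _ => 1) n (CD.basis n α) (CD.basis n β)

/-- Multiplication with all signs `εᵢ = 1`. -/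
abbrev CD.mul1 (n : ℕ) : CD n → CD n → CD n := CD.mul (fun _ => 1) n

/-- Associator with all signs `εᵢ = 1`. -/
abbrev CD.assoc1 (n : ℕ) : CD n → CD n → CD n → CD n := CD.assoc (fun _ => 1) n

/-! In `𝔸ₙ` (all `εᵢ = 1`) the product of two basis elements is `e_α e_β = ± e_{α ∆ β}`, and
conjugation is an anti-involution negating every pure basis element, so `conj (xy) = yx` for such
`x`, `y`: two distinct pure basis elements anticommute. For a triad `(b, c, d)`, `d ≠ ±bc` says
exactly that `b` and `dc`, `d` and `cb`, `c` and `bd` are distinct pure basis elements up to sign.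
Each of these pairs anticommutes, and the six terms of `T(b, c, d)` then collapse to
`2 (bd) c = ± 2 e_{α ∆ β ∆ γ} ≠ 0`.
-/

open scoped symmDiff

namespace CD

section Pair

variable {n : ℕ}

/-- `CD (n + 1)` is `CD n × CD n` only after unfolding `CD`; naming the splitting lets `rw`
see it. -/
def pair (a b : CD n) : CD (n + 1) := (a, b)

theorem exists_eq_pair (x : CD (n + 1)) : ∃ a b : CD n, x = pair a b := ⟨x.1, x.2, rfl⟩

theorem pair_inj {a b c d : CD n} : pair a b = pair c d ↔ a = c ∧ b = d := Prod.mk_inj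

theorem pair_zero_zero : pair (0 : CD n) 0 = 0 := rfl

theorem pair_add_pair (a b c d : CD n) : pair a b + pair c d = pair (a + c) (b + d) := rfl

theorem smul_pair (s : ℝ) (a b : CD n) : s • pair a b = pair (s • a) (s • b) := rfl

theorem neg_pair (a b : CD n) : -pair a b = pair (-a) (-b) := rfl

theorem conj_pair (a b : CD n) : conj (n + 1) (pair a b) = pair (conj n a) (-b) := rfl

theorem mul1_pair (a b c d : CD n) :
    mul1 (n + 1) (pair a b) (pair c d) =
      pair (mul1 n a c - mul1 n (conj n d) b) (mul1 n d a + mul1 n b (conj n c)) := by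
  show pair (mul1 n a c - (1 : ℝ) • mul1 n (conj n d) b) _ = _
  rw [one_smul]
  rfl

end Pair

theorem conj_add : ∀ (n : ℕ) (x y : CD n), conj n (x + y) = conj n x + conj n y
  | 0, _, _ => rfl
  | n + 1, x, y => by
    obtain ⟨a, b, rfl⟩ := exists_eq_pair x
    obtain ⟨c, d, rfl⟩ := exists_eq_pair y
    rw [pair_add_pair, conj_pair, conj_pair, conj_pair, pair_add_pair, conj_add n, neg_add]

theorem conj_smul : ∀ (n : ℕ) (s : ℝ) (x : CD n), conj n (s • x) = s • conj n x
  | 0, _, _ => rfl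
  | n + 1, s, x => by
    obtain ⟨a, b, rfl⟩ := exists_eq_pair x
    rw [smul_pair, conj_pair, conj_pair, smul_pair, conj_smul n, smul_neg]

theorem conj_zero (n : ℕ) : conj n 0 = 0 := by
  simpa using conj_smul n 0 0

theorem conj_neg (n : ℕ) (x : CD n) : conj n (-x) = -conj n x := by
  simpa using conj_smul n (-1) x

theorem conj_sub (n : ℕ) (x y : CD n) : conj n (x - y) = conj n x - conj n y := by
  rw [sub_eq_add_neg, conj_add, conj_neg, sub_eq_add_neg]

theorem conj_conj : ∀ (n : ℕ) (x : CD n), conj n (conj n x) = x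
  | 0, _ => rfl
  | n + 1, x => by
    obtain ⟨a, b, rfl⟩ := exists_eq_pair x
    rw [conj_pair, conj_pair, conj_conj n, neg_neg]

mutual

theorem mul1_smul_left : ∀ (n : ℕ) (s : ℝ) (x y : CD n), mul1 n (s • x) y = s • mul1 n x y
  | 0, s, x, y => smul_mul_assoc s (show ℝ from x) (show ℝ from y)
  | n + 1, s, x, y => by
    obtain ⟨a, b, rfl⟩ := exists_eq_pair x
    obtain ⟨c, d, rfl⟩ := exists_eq_pair y
    rw [smul_pair, mul1_pair, mul1_pair, smul_pair, mul1_smul_left n, mul1_smul_left n,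
      mul1_smul_right n, mul1_smul_right n, smul_sub, smul_add]

theorem mul1_smul_right : ∀ (n : ℕ) (s : ℝ) (x y : CD n), mul1 n x (s • y) = s • mul1 n x y
  | 0, s, x, y => mul_smul_comm s (show ℝ from x) (show ℝ from y)
  | n + 1, s, x, y => by
    obtain ⟨a, b, rfl⟩ := exists_eq_pair x
    obtain ⟨c, d, rfl⟩ := exists_eq_pair y
    rw [smul_pair, mul1_pair, mul1_pair, smul_pair, conj_smul, conj_smul, mul1_smul_left n,
      mul1_smul_left n, mul1_smul_right n, mul1_smul_right n, smul_sub, smul_add]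

end

theorem mul1_zero_left (n : ℕ) (x : CD n) : mul1 n 0 x = 0 := by
  simpa using mul1_smul_left n 0 0 x

theorem mul1_zero_right (n : ℕ) (x : CD n) : mul1 n x 0 = 0 := by
  simpa using mul1_smul_right n 0 x 0

theorem mul1_neg_left (n : ℕ) (x y : CD n) : mul1 n (-x) y = -mul1 n x y := by
  simpa using mul1_smul_left n (-1) x y

theorem mul1_neg_right (n : ℕ) (x y : CD n) : mul1 n x (-y) = -mul1 n x y := by
  simpa using mul1_smul_right n (-1) x y

theorem conj_mul1 : ∀ (n : ℕ) (x y : CD n), conj n (mul1 n x y) = mul1 n (conj n y) (conj n x)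
  | 0, x, y => mul_comm (show ℝ from x) (show ℝ from y)
  | n + 1, x, y => by
    obtain ⟨a, b, rfl⟩ := exists_eq_pair x
    obtain ⟨c, d, rfl⟩ := exists_eq_pair y
    simp only [mul1_pair, conj_pair, conj_sub, conj_neg, conj_conj, conj_mul1 n, mul1_neg_left,
      mul1_neg_right, neg_neg, neg_add_rev]

theorem mul1_anticomm_of_conj_eq_neg {n : ℕ} {x y : CD n} (hx : conj n x = -x) (hy : conj n y = -y)
    (hxy : conj n (mul1 n x y) = -mul1 n x y) : mul1 n y x = -mul1 n x y := by
  rw [← hxy, conj_mul1, hx, hy, mul1_neg_left, mul1_neg_right, neg_neg]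

theorem triple_assoc_eq_of_anticomm {n : ℕ} {b c d : CD n}
    (hb : mul1 n b (mul1 n d c) = -mul1 n (mul1 n d c) b)
    (hd : mul1 n d (mul1 n c b) = -mul1 n (mul1 n c b) d)
    (hc : mul1 n c (mul1 n b d) = -mul1 n (mul1 n b d) c) :
    assoc1 n b d c - assoc1 n d c b + assoc1 n c b d = (2 : ℝ) • mul1 n (mul1 n b d) c := by
  simp only [assoc1, assoc, hb, hd, hc]
  rw [two_smul]
  abel

theorem basis_succ (n : ℕ) (α : Finset ℕ) :
    basis (n + 1) α =
      if n + 1 ∈ α then pair 0 (basis n (α.erase (n + 1))) else pair (basis n α) 0 :=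
  rfl

theorem basis_erase_of_lt : ∀ {n m : ℕ} (α : Finset ℕ), n < m → basis n (α.erase m) = basis n α
  | 0, _, _, _ => rfl
  | n + 1, m, α, h => by
    have hmem : n + 1 ∈ α.erase m ↔ n + 1 ∈ α := by simp [Finset.mem_erase, h.ne]
    rw [basis_succ, basis_succ, if_congr hmem rfl rfl, Finset.erase_right_comm,
      basis_erase_of_lt _ (by omega : n < m), basis_erase_of_lt _ (by omega : n < m)]

theorem basis_succ_of_mem {n : ℕ} {α : Finset ℕ} (h : n + 1 ∈ α) :
    basis (n + 1) α = pair 0 (basis n α) := by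
  rw [basis_succ, if_pos h, basis_erase_of_lt α n.lt_succ_self]

theorem basis_succ_of_notMem {n : ℕ} {α : Finset ℕ} (h : n + 1 ∉ α) :
    basis (n + 1) α = pair (basis n α) 0 := by
  rw [basis_succ, if_neg h]

theorem basis_ne_zero : ∀ (n : ℕ) (α : Finset ℕ), basis n α ≠ 0
  | 0, _ => one_ne_zero (α := ℝ)
  | n + 1, α => by
    rw [← pair_zero_zero]
    by_cases h : n + 1 ∈ α
    · rw [basis_succ_of_mem h, Ne, pair_inj]
      exact fun h => basis_ne_zero n α h.2
    · rw [basis_succ_of_notMem h, Ne, pair_inj]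
      exact fun h => basis_ne_zero n α h.1

theorem IsPure.of_succ {n : ℕ} {α : Finset ℕ} (h : IsPure (n + 1) α) (hn : n + 1 ∉ α) :
    IsPure n α := by
  refine ⟨h.1, fun x hx => ?_⟩
  have hx' := Finset.mem_Icc.1 (h.2 hx)
  have hxn : x ≠ n + 1 := fun e => hn (e ▸ hx)
  exact Finset.mem_Icc.2 ⟨hx'.1, by omega⟩

theorem IsPure.symmDiff {n : ℕ} {α β : Finset ℕ} (hα : IsPure n α) (hβ : IsPure n β)
    (hne : α ≠ β) : IsPure n (α ∆ β) :=
  ⟨Finset.nonempty_iff_ne_empty.2 (fun h => hne (symmDiff_eq_bot.1 h)),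
    Finset.symmDiff_subset_union.trans (Finset.union_subset hα.2 hβ.2)⟩

theorem exists_conj_basis_eq_smul :
    ∀ (n : ℕ) (α : Finset ℕ), ∃ t : ℝ, |t| = 1 ∧ conj n (basis n α) = t • basis n α
  | 0, _ => ⟨1, abs_one, (one_smul ℝ _).symm⟩
  | n + 1, α => by
    by_cases h : n + 1 ∈ α
    · refine ⟨-1, by simp, ?_⟩
      rw [basis_succ_of_mem h, conj_pair, conj_zero, smul_pair, smul_zero, neg_one_smul]
    · obtain ⟨t, ht, hconj⟩ := exists_conj_basis_eq_smul n α
      refine ⟨t, ht, ?_⟩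
      rw [basis_succ_of_notMem h, conj_pair, hconj, smul_pair, smul_zero, neg_zero]

theorem conj_basis_of_isPure :
    ∀ {n : ℕ} {α : Finset ℕ}, IsPure n α → conj n (basis n α) = -basis n α
  | 0, _, h => by simpa using h.2 h.1.choose_spec
  | n + 1, α, h => by
    by_cases hn : n + 1 ∈ α
    · rw [basis_succ_of_mem hn, conj_pair, conj_zero, neg_pair, neg_zero]
    · rw [basis_succ_of_notMem hn, conj_pair, conj_basis_of_isPure (h.of_succ hn), neg_pair,
        neg_zero]

theorem exists_mul1_basis_eq_smul : ∀ (n : ℕ) (α β : Finset ℕ),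
    ∃ s : ℝ, |s| = 1 ∧ mul1 n (basis n α) (basis n β) = s • basis n (α ∆ β)
  | 0, _, _ => ⟨1, abs_one, by rw [one_smul]; exact one_mul (1 : ℝ)⟩
  | n + 1, α, β => by
    obtain ⟨s, hs, hαβ⟩ := exists_mul1_basis_eq_smul n α β
    obtain ⟨s', hs', hβα⟩ := exists_mul1_basis_eq_smul n β α
    obtain ⟨t, ht, hconj⟩ := exists_conj_basis_eq_smul n β
    rw [symmDiff_comm] at hβα
    have hmem : n + 1 ∈ α ∆ β ↔ ¬(n + 1 ∈ α ↔ n + 1 ∈ β) := by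
      rw [Finset.mem_symmDiff]
      tauto
    by_cases hα : n + 1 ∈ α <;> by_cases hβ : n + 1 ∈ β
    · refine ⟨-(t * s'), by rw [abs_neg, abs_mul, ht, hs', one_mul], ?_⟩
      rw [basis_succ_of_mem hα, basis_succ_of_mem hβ,
        basis_succ_of_notMem (by rw [hmem]; tauto), mul1_pair]
      simp only [mul1_zero_right, conj_zero, hconj, mul1_smul_left, hβα, smul_pair, smul_zero,
        add_zero, zero_sub, smul_smul, neg_smul, neg_pair, neg_zero]
    · refine ⟨t * s, by rw [abs_mul, ht, hs, one_mul], ?_⟩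
      rw [basis_succ_of_mem hα, basis_succ_of_notMem hβ,
        basis_succ_of_mem (by rw [hmem]; tauto), mul1_pair]
      simp only [mul1_zero_left, mul1_zero_right, conj_zero, hconj, mul1_smul_right, hαβ,
        smul_pair, smul_zero, zero_add, sub_zero, smul_smul]
    · refine ⟨s', hs', ?_⟩
      rw [basis_succ_of_notMem hα, basis_succ_of_mem hβ,
        basis_succ_of_mem (by rw [hmem]; tauto), mul1_pair]
      simp only [mul1_zero_right, conj_zero, hβα, smul_pair, smul_zero, add_zero, sub_zero]
    · refine ⟨s, hs, ?_⟩
      rw [basis_succ_of_notMem hα, basis_succ_of_notMem hβ,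
        basis_succ_of_notMem (by rw [hmem]; tauto), mul1_pair]
      simp only [mul1_zero_left, mul1_zero_right, conj_zero, hαβ, smul_pair, smul_zero, add_zero,
        sub_zero]

theorem mul1_mul1_basis_ne_zero (n : ℕ) (α β γ : Finset ℕ) :
    mul1 n (mul1 n (basis n α) (basis n β)) (basis n γ) ≠ 0 := by
  obtain ⟨s, hs, hαβ⟩ := exists_mul1_basis_eq_smul n α β
  obtain ⟨s', hs', hαβγ⟩ := exists_mul1_basis_eq_smul n (α ∆ β) γ
  rw [hαβ, mul1_smul_left, hαβγ, smul_smul]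
  refine smul_ne_zero ?_ (basis_ne_zero n _)
  rw [← abs_ne_zero, abs_mul, hs, hs', one_mul]
  exact one_ne_zero

theorem basis_anticomm_of_isPure {n : ℕ} {α β : Finset ℕ} (hα : IsPure n α)
    (hβ : IsPure n β) (hne : α ≠ β) :
    mul1 n (basis n β) (basis n α) = -mul1 n (basis n α) (basis n β) := by
  refine mul1_anticomm_of_conj_eq_neg (conj_basis_of_isPure hα) (conj_basis_of_isPure hβ) ?_
  obtain ⟨s, -, hαβ⟩ := exists_mul1_basis_eq_smul n α β
  rw [hαβ, conj_smul, conj_basis_of_isPure (hα.symmDiff hβ hne), smul_neg]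

theorem basis_anticomm_mul1_basis {n : ℕ} {α β γ : Finset ℕ} (hα : IsPure n α)
    (hβγ : IsPure n (β ∆ γ)) (hne : α ≠ β ∆ γ) :
    mul1 n (basis n α) (mul1 n (basis n β) (basis n γ))
      = -mul1 n (mul1 n (basis n β) (basis n γ)) (basis n α) := by
  obtain ⟨s, -, hβγ'⟩ := exists_mul1_basis_eq_smul n β γ
  rw [hβγ', mul1_smul_right, mul1_smul_left, basis_anticomm_of_isPure hβγ hα hne.symm,
    smul_neg]

theorem IsTriad.ne_symmDiff {n : ℕ} {α β γ : Finset ℕ} (h : IsTriad n α β γ) : γ ≠ α ∆ β := by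
  rintro rfl
  obtain ⟨s, hs, hαβ⟩ := exists_mul1_basis_eq_smul n α β
  rcases (abs_eq zero_le_one).1 hs with rfl | rfl
  · exact h.2.2.2.2.2.2.1 (by rw [one_smul] at hαβ; exact hαβ.symm)
  · exact h.2.2.2.2.2.2.2 (by rw [neg_one_smul] at hαβ; exact (neg_eq_iff_eq_neg.2 hαβ).symm)

end CD

/-- For every triad `(b,c,d)` the triple associator
`T(b,c,d) = [b,d,c] − [d,c,b] + [c,b,d]` equals `2·((b·d)·c)` and is nonzero. -/
theorem stmt6 (n : ℕ) (α β γ : Finset ℕ) (h : CD.IsTriad n α β γ)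
    (b c d : CD n) (hb : b = CD.basis n α) (hc : c = CD.basis n β)
    (hd : d = CD.basis n γ) :
    CD.assoc1 n b d c - CD.assoc1 n d c b + CD.assoc1 n c b d
        = (2 : ℝ) • CD.mul1 n (CD.mul1 n b d) c ∧
    CD.assoc1 n b d c - CD.assoc1 n d c b + CD.assoc1 n c b d ≠ 0 := by
  subst hb hc hd
  have hne := h.ne_symmDiff
  obtain ⟨hα, hβ, hγ, hαβ, hαγ, hβγ, -⟩ := h
  have hα' : α ≠ γ ∆ β := by
    rintro rfl
    exact hne (symmDiff_symmDiff_cancel_right β γ).symm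
  have hγ' : γ ≠ β ∆ α := symmDiff_comm α β ▸ hne
  have hβ' : β ≠ α ∆ γ := by
    rintro rfl
    exact hne (symmDiff_symmDiff_cancel_left α γ).symm
  have hT := CD.triple_assoc_eq_of_anticomm
    (CD.basis_anticomm_mul1_basis hα (hγ.symmDiff hβ hβγ.symm) hα')
    (CD.basis_anticomm_mul1_basis hγ (hβ.symmDiff hα hαβ.symm) hγ')
    (CD.basis_anticomm_mul1_basis hβ (hα.symmDiff hγ hαγ) hβ')
  exact ⟨hT, hT ▸ smul_ne_zero two_ne_zero (CD.mul1_mul1_basis_ne_zero n α γ β)⟩
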